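/- Let z = diag(t1^k t2^l, t1^{-k} t2^{-l})·g with g = (a b; c d) ∈ I and (k,l) ≥ (0,0). If m, j ∈ ℤ and η^{(1)}_{m, j+l}·z^{-1} ∈ I·η^{(1)}_{i,j}·I with i ∈ ℤ and j ≥ 0, then m = i + k. (That is, right-multiplying the diagonal double coset representative of bidegree (i+k, j+l) by inverses of coset representatives of C^{(1)}_{k,l} can only land in the diagonal double coset of bidegree (i,j) when the first indices add correctly.) -/

import Mathlib

noncomputable section

/-- The 2-dimensional local field `F = 𝔽_q((t1))((t2))` (iterated Laurent series). -/
abbrev F2 (Fq : Type) [Field Fq] : Type := LaurentSeries (LaurentSeries Fq)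

variable (Fq : Type) [Field Fq] [Fintype Fq]

/-- The local parameter `t1`. -/
def t1 : F2 Fq := HahnSeries.single 0 (HahnSeries.single 1 1)

/-- The local parameter `t2`. -/
def t2 : F2 Fq := HahnSeries.single 1 1

/-- The rank-two valuation `v(x) = (v1 x, v2 x)` of a nonzero `x` (junk value at `0`):
`v2 x` is the `t2`-adic order of `x`, and `v1 x` is the `t1`-adic order of the leading
`t2`-coefficient of `x`. -/
def vv (x : F2 Fq) : ℤ × ℤ := ((x.coeff x.order).order, x.order)

/-- The lexicographic-from-the-right (non-strict) order on `ℤ²`. -/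
def lexle (a b : ℤ × ℤ) : Prop := a.2 < b.2 ∨ (a.2 = b.2 ∧ a.1 ≤ b.1)

/-- The lexicographic-from-the-right strict order on `ℤ²`. -/
def lexlt (a b : ℤ × ℤ) : Prop := a.2 < b.2 ∨ (a.2 = b.2 ∧ a.1 < b.1)

/-- `v(x) ≤ v(y)`, with the convention `v(0) = ∞`. -/
def vle (x y : F2 Fq) : Prop := x ≠ 0 ∧ (y = 0 ∨ lexle (vv Fq x) (vv Fq y))

/-- `v(x) < v(y)`, with the convention `v(0) = ∞`. -/
def vlt (x y : F2 Fq) : Prop := x ≠ 0 ∧ (y = 0 ∨ lexlt (vv Fq x) (vv Fq y))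

/-- The rank-two valuation ring `O` of `F`. -/
def Oring : Set (F2 Fq) := {x | x = 0 ∨ lexle (0, 0) (vv Fq x)}

/-- `SL₂(F)` as the set of 2×2 matrices of determinant 1. -/
def SL2 : Set (Matrix (Fin 2) (Fin 2) (F2 Fq)) := {g | g.det = 1}

/-- The (double) Iwahori subgroup `I ⊆ SL₂(O)`: entries in `O`, lower-left entry in `t1·O`. -/
def Iwahori : Set (Matrix (Fin 2) (Fin 2) (F2 Fq)) :=
  {g | g.det = 1 ∧ (∀ i j, g i j ∈ Oring Fq) ∧ ∃ y ∈ Oring Fq, g 1 0 = t1 Fq * y}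

/-- The matrix `η^{(1)}_{i,j} = diag(t1^i t2^j, t1^{-i} t2^{-j})`. -/
def eta1 (i j : ℤ) : Matrix (Fin 2) (Fin 2) (F2 Fq) :=
  !![t1 Fq ^ i * t2 Fq ^ j, 0; 0, t1 Fq ^ (-i) * t2 Fq ^ (-j)]

/-- The matrix `η^{(2)}_{i,j} = (0, t1^i t2^j; -t1^{-i} t2^{-j}, 0)`. -/
def eta2 (i j : ℤ) : Matrix (Fin 2) (Fin 2) (F2 Fq) :=
  !![0, t1 Fq ^ i * t2 Fq ^ j; -(t1 Fq ^ (-i) * t2 Fq ^ (-j)), 0]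

/-- The double coset `I·η·I`. -/
def doubleCoset (η : Matrix (Fin 2) (Fin 2) (F2 Fq)) : Set (Matrix (Fin 2) (Fin 2) (F2 Fq)) :=
  {x | ∃ g ∈ Iwahori Fq, ∃ h ∈ Iwahori Fq, x = g * η * h}

/-- The right coset `I·z`. -/
def rcoset (z : Matrix (Fin 2) (Fin 2) (F2 Fq)) : Set (Matrix (Fin 2) (Fin 2) (F2 Fq)) :=
  {x | ∃ g ∈ Iwahori Fq, x = g * z}

set_option linter.unusedSectionVars false
set_option maxHeartbeats 1000000
set_option synthInstance.maxHeartbeats 1000000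

variable {Fq}

lemma vv_mul {x y : F2 Fq} (hx : x ≠ 0) (hy : y ≠ 0) : vv Fq (x * y) = vv Fq x + vv Fq y := by
  have h1 : (x * y).order = x.order + y.order := HahnSeries.order_mul hx hy
  have h2 : (x * y).coeff (x.order + y.order) = x.coeff x.order * y.coeff y.order := by
    rw [HahnSeries.coeff_mul_order_add_order, HahnSeries.leadingCoeff_eq,
      HahnSeries.leadingCoeff_eq]
  have hcx : x.coeff x.order ≠ 0 := HahnSeries.coeff_order_eq_zero.not.mpr hx
  have hcy : y.coeff y.order ≠ 0 := HahnSeries.coeff_order_eq_zero.not.mpr hy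
  unfold vv
  rw [h1, h2, HahnSeries.order_mul hcx hcy]
  rfl

lemma vv_one : vv Fq 1 = (0, 0) := by
  unfold vv
  rw [HahnSeries.order_one]
  have : ((1 : F2 Fq)).coeff 0 = 1 := by
    simp [HahnSeries.coeff_one]
  rw [this, HahnSeries.order_one]

lemma t1_ne : (t1 Fq) ≠ 0 := HahnSeries.single_ne_zero (HahnSeries.single_ne_zero one_ne_zero)
lemma t2_ne : (t2 Fq) ≠ 0 := HahnSeries.single_ne_zero one_ne_zero

lemma vv_t1 : vv Fq (t1 Fq) = (1, 0) := by
  have h1 : (HahnSeries.single (1:ℤ) (1:Fq)) ≠ 0 := HahnSeries.single_ne_zero one_ne_zero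
  unfold vv t1
  rw [HahnSeries.order_single h1, HahnSeries.coeff_single_same, HahnSeries.order_single one_ne_zero]

lemma vv_t2 : vv Fq (t2 Fq) = (0, 1) := by
  unfold vv t2
  rw [HahnSeries.order_single one_ne_zero, HahnSeries.coeff_single_same, HahnSeries.order_one]

lemma vv_inv {x : F2 Fq} (hx : x ≠ 0) : vv Fq x⁻¹ = - vv Fq x := by
  have hxi : x⁻¹ ≠ 0 := inv_ne_zero (G₀ := F2 Fq) hx
  have h := vv_mul hxi hx
  have h2 : x⁻¹ * x = 1 := inv_mul_cancel₀ (G₀ := F2 Fq) hx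
  rw [h2, vv_one] at h
  have : (0, 0) = (0 : ℤ × ℤ) := rfl
  rw [this] at h
  exact eq_neg_of_add_eq_zero_left h.symm

lemma vv_pow {x : F2 Fq} (hx : x ≠ 0) : ∀ n : ℕ, vv Fq (x ^ n) = n • vv Fq x
  | 0 => by simp [pow_zero, vv_one]
  | (k+1) => by
      rw [pow_succ, vv_mul (pow_ne_zero k hx) hx, vv_pow hx k, add_nsmul, one_nsmul]

lemma vv_zpow {x : F2 Fq} (hx : x ≠ 0) (n : ℤ) : vv Fq (x ^ n) = n • vv Fq x := by
  obtain ⟨k, rfl | rfl⟩ := n.eq_nat_or_neg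
  · rw [zpow_natCast, vv_pow hx, natCast_zsmul]
  · rw [zpow_neg x (k:ℤ), zpow_natCast, vv_inv (pow_ne_zero (M₀ := F2 Fq) _ hx), vv_pow hx, neg_smul, natCast_zsmul]

lemma vv_t1z (n : ℤ) : vv Fq (t1 Fq ^ n) = (n, 0) := by
  rw [vv_zpow t1_ne, vv_t1]; simp
lemma vv_t2z (n : ℤ) : vv Fq (t2 Fq ^ n) = (0, n) := by
  rw [vv_zpow t2_ne, vv_t2]; simp

lemma order_eq_of' {R : Type*} [Zero R] {z : HahnSeries ℤ R} {o : ℤ}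
    (h1 : z.coeff o ≠ 0) (h2 : ∀ i, i < o → z.coeff i = 0) : z.order = o := by
  have hz : z ≠ 0 := HahnSeries.ne_zero_of_coeff_ne_zero h1
  rcases lt_or_eq_of_le (HahnSeries.order_le_of_coeff_ne_zero h1) with hlt | he
  · exact absurd (h2 _ hlt) (HahnSeries.coeff_order_eq_zero.not.mpr hz)
  · exact he

lemma order_add_lt {R : Type*} [AddMonoid R] {x y : HahnSeries ℤ R} (hx : x ≠ 0)
    (h : x.order < y.order) : x + y ≠ 0 ∧ (x + y).order = x.order := by
  have hc : (x + y).coeff x.order = x.coeff x.order := by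
    rw [HahnSeries.coeff_add, HahnSeries.coeff_eq_zero_of_lt_order h, add_zero]
  have hne : (x + y).coeff x.order ≠ 0 := by
    rw [hc]; exact HahnSeries.coeff_order_eq_zero.not.mpr hx
  refine ⟨HahnSeries.ne_zero_of_coeff_ne_zero hne, order_eq_of' hne fun i hi => ?_⟩
  rw [HahnSeries.coeff_add, HahnSeries.coeff_eq_zero_of_lt_order hi,
    HahnSeries.coeff_eq_zero_of_lt_order (hi.trans h), add_zero]

lemma vv_add {x y : F2 Fq} (hx : x ≠ 0)
    (h : y = 0 ∨ (y ≠ 0 ∧ lexlt (vv Fq x) (vv Fq y))) :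
    x + y ≠ 0 ∧ vv Fq (x + y) = vv Fq x := by
  rcases h with rfl | ⟨hy, hlt⟩
  · rw [add_zero]; exact ⟨hx, rfl⟩
  rcases hlt with hlt | ⟨he, hlt⟩
  · have hlt' : x.order < y.order := hlt
    have h1 := order_add_lt hx hlt'
    have hc : (x + y).coeff x.order = x.coeff x.order := by
      rw [HahnSeries.coeff_add, HahnSeries.coeff_eq_zero_of_lt_order hlt', add_zero]
    exact ⟨h1.1, by unfold vv; rw [h1.2, hc]⟩
  · have he' : x.order = y.order := he
    have hlt' : (x.coeff x.order).order < (y.coeff y.order).order := hlt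
    have hcx : x.coeff x.order ≠ 0 := HahnSeries.coeff_order_eq_zero.not.mpr hx
    have inner := order_add_lt hcx hlt'
    have hc : (x + y).coeff x.order = x.coeff x.order + y.coeff y.order := by
      rw [HahnSeries.coeff_add, he']
    have hne : (x + y).coeff x.order ≠ 0 := by rw [hc]; exact inner.1
    have ho : (x + y).order = x.order := by
      refine order_eq_of' hne fun a ha => ?_
      rw [HahnSeries.coeff_add, HahnSeries.coeff_eq_zero_of_lt_order ha,
        HahnSeries.coeff_eq_zero_of_lt_order (he' ▸ ha), add_zero]
    exact ⟨HahnSeries.ne_zero_of_coeff_ne_zero hne, by unfold vv; rw [ho, hc, inner.2]⟩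

lemma vv_term {c d : F2 Fq} (hc : c ≠ 0) (hd : d ≠ 0) (p q p' q' : ℤ) :
    c * d * (t1 Fq ^ p * t2 Fq ^ q * (t1 Fq ^ p' * t2 Fq ^ q')) ≠ 0 ∧
    vv Fq (c * d * (t1 Fq ^ p * t2 Fq ^ q * (t1 Fq ^ p' * t2 Fq ^ q')))
      = vv Fq c + vv Fq d + (p + p', q + q') := by
  have h1 : (t1 Fq ^ p) ≠ 0 := zpow_ne_zero (G₀ := F2 Fq) _ t1_ne
  have h2 : (t2 Fq ^ q) ≠ 0 := zpow_ne_zero (G₀ := F2 Fq) _ t2_ne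
  have h3 : (t1 Fq ^ p') ≠ 0 := zpow_ne_zero (G₀ := F2 Fq) _ t1_ne
  have h4 : (t2 Fq ^ q') ≠ 0 := zpow_ne_zero (G₀ := F2 Fq) _ t2_ne
  have hm : (t1 Fq ^ p * t2 Fq ^ q * (t1 Fq ^ p' * t2 Fq ^ q')) ≠ 0 :=
    mul_ne_zero (mul_ne_zero h1 h2) (mul_ne_zero h3 h4)
  refine ⟨mul_ne_zero (mul_ne_zero hc hd) hm, ?_⟩
  rw [vv_mul (mul_ne_zero hc hd) hm, vv_mul hc hd,
    vv_mul (mul_ne_zero h1 h2) (mul_ne_zero h3 h4), vv_mul h1 h2, vv_mul h3 h4,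
    vv_t1z, vv_t2z, vv_t1z, vv_t2z]
  simp [Prod.ext_iff]


lemma lex_shift {r : ℤ × ℤ} (h : lexle (0,0) r) : lexle (1,0) ((1,0) + r) := by
  obtain ⟨a, b⟩ := r
  simp only [lexle, Prod.mk_add_mk] at *
  omega

lemma lex_pos {p q : ℤ × ℤ} (hp : lexle (0,0) p) (hq : lexle (1,0) q) :
    lexlt (0,0) (p + q) := by
  obtain ⟨p1, p2⟩ := p; obtain ⟨q1, q2⟩ := q
  simp only [lexle, lexlt, Prod.mk_add_mk] at *
  omega

lemma zpow_add_t1 (p q : ℤ) : t1 Fq ^ (p + q) = t1 Fq ^ p * t1 Fq ^ q :=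
  zpow_add₀ (G₀ := F2 Fq) t1_ne p q

lemma zpow_add_t2 (p q : ℤ) : t2 Fq ^ (p + q) = t2 Fq ^ p * t2 Fq ^ q :=
  zpow_add₀ (G₀ := F2 Fq) t2_ne p q

lemma t1_zpow_cancel (p : ℤ) : t1 Fq ^ p * t1 Fq ^ (-p) = 1 := by
  rw [← zpow_add_t1, add_neg_cancel, zpow_zero]

lemma t2_zpow_cancel (p : ℤ) : t2 Fq ^ p * t2 Fq ^ (-p) = 1 := by
  rw [← zpow_add_t2, add_neg_cancel, zpow_zero]

lemma lexA {p q : ℤ × ℤ} {i j k l : ℤ} (hp : lexle (1,0) p) (hq : lexle (0,0) q)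
    (hj : 0 ≤ j) (hA : 0 ≤ i ∨ 0 < j) :
    lexlt (((0,0) : ℤ × ℤ) + (0,0) + (-i + -k, -j + -l)) (p + q + (i + -k, j + -l)) := by
  obtain ⟨p1, p2⟩ := p; obtain ⟨q1, q2⟩ := q
  simp only [lexle, lexlt, Prod.mk_add_mk] at *
  omega

lemma lexB {p q : ℤ × ℤ} {i j k l : ℤ} (hp : lexle (0,0) p) (hq : lexle (1,0) q)
    (hi : i < 0) (hj : j = 0) :
    lexlt (((0,0) : ℤ × ℤ) + (0,0) + (i + k, j + l)) (p + q + (-i + k, -j + l)) := by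
  obtain ⟨p1, p2⟩ := p; obtain ⟨q1, q2⟩ := q
  simp only [lexle, lexlt, Prod.mk_add_mk] at *
  omega

lemma mem_O_lex {x : F2 Fq} (h : x ∈ Oring Fq) (hx : x ≠ 0) : lexle (0,0) (vv Fq x) := by
  have h' : x = 0 ∨ lexle (0,0) (vv Fq x) := h
  exact h'.resolve_left hx

lemma iwahori_c {g : Matrix (Fin 2) (Fin 2) (F2 Fq)} (hg : g ∈ Iwahori Fq) (h : g 1 0 ≠ 0) :
    lexle (1, 0) (vv Fq (g 1 0)) := by
  obtain ⟨-, -, y, hy, hc⟩ := hg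
  have hy0 : y ≠ 0 := by rintro rfl; exact h (by rw [hc]; ring)
  rw [hc, vv_mul t1_ne hy0, vv_t1]
  exact lex_shift (mem_O_lex hy hy0)

lemma lex_unit {p q : ℤ × ℤ} (hp : lexle (0,0) p) (hq : lexle (0,0) q)
    (h : p + q = (0,0)) : p = (0,0) ∧ q = (0,0) := by
  obtain ⟨p1, p2⟩ := p; obtain ⟨q1, q2⟩ := q
  simp only [lexle, Prod.mk_add_mk, Prod.mk.injEq] at *
  omega

lemma iwahori_unit {g : Matrix (Fin 2) (Fin 2) (F2 Fq)} (hg : g ∈ Iwahori Fq) :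
    (g 0 0 ≠ 0 ∧ vv Fq (g 0 0) = (0,0)) ∧ (g 1 1 ≠ 0 ∧ vv Fq (g 1 1) = (0,0)) := by
  obtain ⟨hdet, hO, y, hy, hc⟩ := hg
  rw [Matrix.det_fin_two] at hdet
  have hprod : g 0 0 * g 1 1 = 1 + g 0 1 * g 1 0 := by rw [← hdet]; ring
  have hu : g 0 1 * g 1 0 = 0 ∨ (g 0 1 * g 1 0 ≠ 0 ∧
      lexlt (vv Fq 1) (vv Fq (g 0 1 * g 1 0))) := by
    rcases eq_or_ne (g 0 1 * g 1 0) 0 with h | h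
    · exact Or.inl h
    · refine Or.inr ⟨h, ?_⟩
      have h1 : g 0 1 ≠ 0 := fun h0 => h (by rw [h0]; ring)
      have h2 : g 1 0 ≠ 0 := fun h0 => h (by rw [h0]; ring)
      have hy0 : y ≠ 0 := by rintro rfl; exact h2 (by rw [hc]; ring)
      have hb := mem_O_lex (hO 0 1) h1
      have hcv : lexle (1,0) (vv Fq (g 1 0)) := by
        rw [hc, vv_mul t1_ne hy0, vv_t1]; exact lex_shift (mem_O_lex hy hy0)
      rw [vv_mul h1 h2, vv_one]
      exact lex_pos hb hcv
  have hone : (1 : F2 Fq) ≠ 0 := fun h0 => t1_ne (Fq := Fq) (by rw [← one_mul (t1 Fq), h0]; ring)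
  have hsum := vv_add (x := (1 : F2 Fq)) hone hu
  rw [vv_one] at hsum
  have hne : g 0 0 * g 1 1 ≠ 0 := by rw [hprod]; exact hsum.1
  have h00 : g 0 0 ≠ 0 := fun h0 => hne (by rw [h0]; ring)
  have h11 : g 1 1 ≠ 0 := fun h0 => hne (by rw [h0]; ring)
  have hvv : vv Fq (g 0 0) + vv Fq (g 1 1) = (0,0) := by
    rw [← vv_mul h00 h11, hprod, hsum.2]
  have hres := lex_unit (mem_O_lex (hO 0 0) h00) (mem_O_lex (hO 1 1) h11) hvv
  exact ⟨⟨h00, hres.1⟩, ⟨h11, hres.2⟩⟩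

lemma det_eta1 (i j : ℤ) : (eta1 Fq i j).det = 1 := by
  rw [eta1, Matrix.det_fin_two_of]
  calc t1 Fq ^ i * t2 Fq ^ j * (t1 Fq ^ (-i) * t2 Fq ^ (-j)) - 0 * 0
      = t1 Fq ^ i * t1 Fq ^ (-i) * (t2 Fq ^ j * t2 Fq ^ (-j)) := by ring
    _ = 1 := by rw [t1_zpow_cancel, t2_zpow_cancel]; exact one_mul (1 : F2 Fq)

/-- If `z = diag(t1^k t2^l, t1^{-k} t2^{-l})·g` with `g ∈ I`, `(k,l) ≥ (0,0)`, `j ≥ 0`, and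
`η^{(1)}_{m,j+l}·z⁻¹ ∈ I·η^{(1)}_{i,j}·I`, then `m = i + k`. -/
theorem first_index_additive (Fq : Type) [Field Fq] [Fintype Fq] (i j k l m : ℤ)
    (hkl : lexle (0, 0) (k, l)) (hj : 0 ≤ j)
    (g : Matrix (Fin 2) (Fin 2) (F2 Fq)) (hg : g ∈ Iwahori Fq)
    (hmem : eta1 Fq m (j + l) * (eta1 Fq k l * g)⁻¹ ∈ doubleCoset Fq (eta1 Fq i j)) :
    m = i + k := by
  rw [doubleCoset, Set.mem_setOf_eq] at hmem
  obtain ⟨g1, hg1, g2, hg2, heq⟩ := hmem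
  have hgdet : g.det = 1 := hg.1
  have hdetkg : IsUnit (eta1 Fq k l * g).det := by
    rw [Matrix.det_mul, det_eta1, hgdet]; simp
  have h1 : eta1 Fq m (j + l) = g1 * eta1 Fq i j * g2 * (eta1 Fq k l * g) := by
    conv_lhs => rw [← Matrix.nonsing_inv_mul_cancel_right (eta1 Fq m (j + l)) hdetkg
      (A := eta1 Fq k l * g)]
    rw [heq]
  have hadj : g * g.adjugate = 1 := by
    rw [Matrix.mul_adjugate, hgdet]; exact one_smul (F2 Fq) (1 : Matrix (Fin 2) (Fin 2) (F2 Fq))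
  have heq2 : eta1 Fq m (j + l) * g.adjugate = g1 * eta1 Fq i j * g2 * eta1 Fq k l := by
    rw [h1, mul_assoc (g1 * eta1 Fq i j * g2), mul_assoc (eta1 Fq k l), hadj]
    exact congrArg (fun z => g1 * eta1 Fq i j * g2 * z) (mul_one (eta1 Fq k l))
  have E := congrFun (congrFun heq2 1) 1
  have E' := congrFun (congrFun heq2 0) 0
  simp only [eta1, Matrix.adjugate_fin_two, Matrix.mul_apply, Fin.sum_univ_two,
    Matrix.cons_val', Matrix.cons_val_zero, Matrix.cons_val_one, Matrix.head_cons,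
    Matrix.head_fin_const, Matrix.empty_val', Matrix.cons_val_fin_one, Matrix.of_apply] at E E'
  have hg' := hg
  have hg1' := hg1
  have hg2' := hg2
  obtain ⟨-, hOg, -⟩ := hg'
  obtain ⟨-, hO1, -⟩ := hg1'
  obtain ⟨-, hO2, -⟩ := hg2'
  have hu := iwahori_unit hg
  have hu1 := iwahori_unit hg1
  have hu2 := iwahori_unit hg2
  have hzt1 : ∀ n : ℤ, (t1 Fq ^ n) ≠ 0 := fun n => zpow_ne_zero (G₀ := F2 Fq) n t1_ne
  have hzt2 : ∀ n : ℤ, (t2 Fq ^ n) ≠ 0 := fun n => zpow_ne_zero (G₀ := F2 Fq) n t2_ne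
  rcases (by omega : (0 ≤ i ∨ 0 < j) ∨ (i < 0 ∧ j = 0)) with hA | ⟨hi, hj0⟩
  · have E1 : t1 Fq ^ (-m) * t2 Fq ^ (-(j + l)) * g 0 0
        = g1 1 1 * g2 1 1 * (t1 Fq ^ (-i) * t2 Fq ^ (-j) * (t1 Fq ^ (-k) * t2 Fq ^ (-l)))
          + g1 1 0 * g2 0 1 * (t1 Fq ^ i * t2 Fq ^ j * (t1 Fq ^ (-k) * t2 Fq ^ (-l))) := by
      refine Eq.trans ?_ (Eq.trans E ?_) <;> ring
    have hT0 := vv_term (Fq := Fq) hu1.2.1 hu2.2.1 (-i) (-j) (-k) (-l)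
    have hcases : g1 1 0 * g2 0 1 * (t1 Fq ^ i * t2 Fq ^ j * (t1 Fq ^ (-k) * t2 Fq ^ (-l))) = 0 ∨
        (g1 1 0 * g2 0 1 * (t1 Fq ^ i * t2 Fq ^ j * (t1 Fq ^ (-k) * t2 Fq ^ (-l))) ≠ 0 ∧
          lexlt (vv Fq (g1 1 1 * g2 1 1 *
              (t1 Fq ^ (-i) * t2 Fq ^ (-j) * (t1 Fq ^ (-k) * t2 Fq ^ (-l)))))
            (vv Fq (g1 1 0 * g2 0 1 *
              (t1 Fq ^ i * t2 Fq ^ j * (t1 Fq ^ (-k) * t2 Fq ^ (-l)))))) := by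
      rcases eq_or_ne (g1 1 0) 0 with hz | hz
      · exact Or.inl (by rw [hz]; ring)
      rcases eq_or_ne (g2 0 1) 0 with hz2 | hz2
      · exact Or.inl (by rw [hz2]; ring)
      · have hT1 := vv_term (Fq := Fq) hz hz2 i j (-k) (-l)
        refine Or.inr ⟨hT1.1, ?_⟩
        rw [hT0.2, hT1.2, hu1.2.2, hu2.2.2]
        exact lexA (iwahori_c hg1 hz) (mem_O_lex (hO2 0 1) hz2) hj hA
    have hkey := vv_add hT0.1 hcases
    have hfin : vv Fq (t1 Fq ^ (-m) * t2 Fq ^ (-(j + l)) * g 0 0)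
        = vv Fq (g1 1 1 * g2 1 1 *
            (t1 Fq ^ (-i) * t2 Fq ^ (-j) * (t1 Fq ^ (-k) * t2 Fq ^ (-l)))) := by
      rw [E1]; exact hkey.2
    have hL : vv Fq (t1 Fq ^ (-m) * t2 Fq ^ (-(j + l)) * g 0 0)
        = ((-m, 0) : ℤ × ℤ) + (0, -(j + l)) + (0, 0) := by
      rw [vv_mul (mul_ne_zero (hzt1 _) (hzt2 _)) hu.1.1,
        vv_mul (hzt1 _) (hzt2 _), vv_t1z, vv_t2z, hu.1.2]
    rw [hL, hT0.2, hu1.2.2, hu2.2.2] at hfin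
    simp only [Prod.mk_add_mk, Prod.mk.injEq] at hfin
    omega
  · have E1 : t1 Fq ^ m * t2 Fq ^ (j + l) * g 1 1
        = g1 0 0 * g2 0 0 * (t1 Fq ^ i * t2 Fq ^ j * (t1 Fq ^ k * t2 Fq ^ l))
          + g1 0 1 * g2 1 0 * (t1 Fq ^ (-i) * t2 Fq ^ (-j) * (t1 Fq ^ k * t2 Fq ^ l)) := by
      refine Eq.trans ?_ (Eq.trans E' ?_) <;> ring
    have hT0 := vv_term (Fq := Fq) hu1.1.1 hu2.1.1 i j k l
    have hcases : g1 0 1 * g2 1 0 * (t1 Fq ^ (-i) * t2 Fq ^ (-j) * (t1 Fq ^ k * t2 Fq ^ l)) = 0 ∨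
        (g1 0 1 * g2 1 0 * (t1 Fq ^ (-i) * t2 Fq ^ (-j) * (t1 Fq ^ k * t2 Fq ^ l)) ≠ 0 ∧
          lexlt (vv Fq (g1 0 0 * g2 0 0 *
              (t1 Fq ^ i * t2 Fq ^ j * (t1 Fq ^ k * t2 Fq ^ l))))
            (vv Fq (g1 0 1 * g2 1 0 *
              (t1 Fq ^ (-i) * t2 Fq ^ (-j) * (t1 Fq ^ k * t2 Fq ^ l))))) := by
      rcases eq_or_ne (g1 0 1) 0 with hz | hz
      · exact Or.inl (by rw [hz]; ring)
      rcases eq_or_ne (g2 1 0) 0 with hz2 | hz2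
      · exact Or.inl (by rw [hz2]; ring)
      · have hT1 := vv_term (Fq := Fq) hz hz2 (-i) (-j) k l
        refine Or.inr ⟨hT1.1, ?_⟩
        rw [hT0.2, hT1.2, hu1.1.2, hu2.1.2]
        exact lexB (mem_O_lex (hO1 0 1) hz) (iwahori_c hg2 hz2) hi hj0
    have hkey := vv_add hT0.1 hcases
    have hfin : vv Fq (t1 Fq ^ m * t2 Fq ^ (j + l) * g 1 1)
        = vv Fq (g1 0 0 * g2 0 0 * (t1 Fq ^ i * t2 Fq ^ j * (t1 Fq ^ k * t2 Fq ^ l))) := by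
      rw [E1]; exact hkey.2
    have hL : vv Fq (t1 Fq ^ m * t2 Fq ^ (j + l) * g 1 1)
        = ((m, 0) : ℤ × ℤ) + (0, j + l) + (0, 0) := by
      rw [vv_mul (mul_ne_zero (hzt1 _) (hzt2 _)) hu.2.1,
        vv_mul (hzt1 _) (hzt2 _), vv_t1z, vv_t2z, hu.2.2]
    rw [hL, hT0.2, hu1.1.2, hu2.1.2] at hfin
    simp only [Prod.mk_add_mk, Prod.mk.injEq] at hfin
    omega
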